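/- Let ρ be a permutation of ℕ with unbounded finite cycle lengths, and let C_ρ be the closure of its conjugacy class in Sym(ℕ). Then for each c ∈ ℕ, the set of δ ∈ C_ρ such that c lies in a finite cycle of δ is dense and open in C_ρ; consequently the set of permutations in C_ρ with no infinite cycles is comeagre in C_ρ. -/

import Mathlib

/-!
The conjugates of `ρ` are dense in `C_ρ`, and a basic neighbourhood of a permutation `γ`
prescribes `γ` on a finite set `G`. So, for density, take a conjugate `γ` of `ρ` in which `c` lies
in an infinite cycle: the part of that cycle meeting `G ∪ {c}` lies in a finite segment, and since
the finite cycles of `γ` are unboundedly long while only finitely many of them meet `G`, there is a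
finite cycle longer than the segment and disjoint from `G`. Conjugating `γ` by the swaps that
exchange the segment with a stretch of that cycle yields a conjugate which agrees with `γ` on `G`
and puts `c` in a finite cycle. Openness holds because `δ^[n] c = c` depends on finitely many
values of `δ`; the comeagre set is the countable intersection of these dense open sets.
-/

/-- The cycle (orbit) of `x` under the permutation `γ`. -/
def orbitOf (γ : Equiv.Perm ℕ) (x : ℕ) : Set ℕ := {y | ∃ k : ℤ, (γ ^ k) x = y}

/-- The pointwise convergence topology on `Sym(ℕ)`. -/
instance : TopologicalSpace (Equiv.Perm ℕ) :=
  TopologicalSpace.induced (fun g : Equiv.Perm ℕ => (⇑g, ⇑g.symm)) inferInstance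

/-- The closure of the conjugacy class of `ρ`. -/
def Crho (ρ : Equiv.Perm ℕ) : Set (Equiv.Perm ℕ) :=
  closure {g : Equiv.Perm ℕ | IsConj ρ g}

open Equiv Equiv.Perm Set Function Filter Topology

theorem Function.Injective.iterate_injective_of_notMem_periodicPts {α : Type*} {f : α → α}
    (hf : Injective f) {x : α} (hx : x ∉ periodicPts f) : Injective (f^[·] x) := by
  intro i j h
  by_contra hne
  wlog hij : i < j generalizing i j
  · exact this h.symm (Ne.symm hne) (by omega)
  obtain ⟨k, rfl⟩ := Nat.exists_eq_add_of_lt hij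
  dsimp only at h
  rw [add_assoc, iterate_add_apply] at h
  exact hx (mk_mem_periodicPts k.succ_pos (hf.iterate i h).symm)

section SwapsProd

variable {α : Type*} [DecidableEq α] (a b : ℕ → α)

def swapsProd : ℕ → Perm α
  | 0 => 1
  | N + 1 => swapsProd N * swap (a N) (b N)

variable {a b}

theorem swapsProd_comm (N : ℕ) : swapsProd a b N = swapsProd b a N := by
  induction N with
  | zero => rfl
  | succ N ih => rw [swapsProd, swapsProd, ih, swap_comm]

theorem swapsProd_apply_of_notMem {N : ℕ} {z : α} (ha : z ∉ a '' Iio N) (hb : z ∉ b '' Iio N) :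
    swapsProd a b N z = z := by
  induction N with
  | zero => rfl
  | succ N ih =>
    have hN : N ∈ Iio (N + 1) := Nat.lt_succ_self N
    rw [swapsProd, Perm.mul_apply, swap_apply_of_ne_of_ne (fun h => ha ⟨N, hN, h.symm⟩)
      (fun h => hb ⟨N, hN, h.symm⟩)]
    exact ih (fun h => ha (image_mono (Iio_subset_Iio N.le_succ) h))
      (fun h => hb (image_mono (Iio_subset_Iio N.le_succ) h))

theorem swapsProd_apply_left {N : ℕ} (ha : InjOn a (Iio N)) (hb : InjOn b (Iio N))
    (hab : Disjoint (a '' Iio N) (b '' Iio N)) {i : ℕ} (hi : i < N) :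
    swapsProd a b N (a i) = b i := by
  induction N with
  | zero => omega
  | succ N ih =>
    have hsub : Iio N ⊆ Iio (N + 1) := Iio_subset_Iio N.le_succ
    have hN : N ∈ Iio (N + 1) := Nat.lt_succ_self N
    rw [swapsProd, Perm.mul_apply]
    rcases (Nat.lt_succ_iff_lt_or_eq.1 hi) with hi | rfl
    · rw [swap_apply_of_ne_of_ne (fun h => hi.ne (ha (hsub hi) hN h))
        (disjoint_iff_forall_ne.1 hab (mem_image_of_mem a (hsub hi)) (mem_image_of_mem b hN))]
      exact ih (ha.mono hsub) (hb.mono hsub) (hab.mono (image_mono hsub) (image_mono hsub)) hi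
    · rw [swap_apply_left]
      refine swapsProd_apply_of_notMem (fun ⟨j, hj, h⟩ => ?_) (fun ⟨j, hj, h⟩ => ?_)
      · exact disjoint_iff_forall_ne.1 hab (mem_image_of_mem a (hsub hj)) (mem_image_of_mem b hN) h
      · exact (hj : j < i).ne (hb (hsub hj) hN h)

theorem swapsProd_apply_right {N : ℕ} (ha : InjOn a (Iio N)) (hb : InjOn b (Iio N))
    (hab : Disjoint (a '' Iio N) (b '' Iio N)) {i : ℕ} (hi : i < N) :
    swapsProd a b N (b i) = a i := by
  rw [swapsProd_comm]
  exact swapsProd_apply_left hb ha hab.symm hi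

end SwapsProd

section Orbit

variable {γ : Perm ℕ} {x y : ℕ}

theorem mem_orbitOf_iff : y ∈ orbitOf γ x ↔ γ.SameCycle x y := Iff.rfl

theorem orbitOf_eq_orbit_zpowers (γ : Perm ℕ) (x : ℕ) :
    orbitOf γ x = MulAction.orbit (Subgroup.zpowers γ) x := by
  ext y
  simp only [orbitOf, MulAction.mem_orbit_iff, Subgroup.exists_zpowers]
  rfl

theorem ncard_orbitOf (γ : Perm ℕ) (x : ℕ) : (orbitOf γ x).ncard = minimalPeriod γ x := by
  rw [orbitOf_eq_orbit_zpowers, ← Nat.card_coe_set_eq,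
    Nat.card_congr (MulAction.orbitZPowersEquiv γ x), Nat.card_zmod]
  rfl

theorem orbitOf_finite_iff : (orbitOf γ x).Finite ↔ x ∈ periodicPts γ := by
  rw [← minimalPeriod_pos_iff_mem_periodicPts, orbitOf_eq_orbit_zpowers, ← Set.finite_coe_iff,
    (MulAction.orbitZPowersEquiv γ x).finite_iff]
  change Finite (ZMod (minimalPeriod γ x)) ↔ _
  rcases minimalPeriod γ x with _ | n
  · simp only [lt_irrefl, iff_false]
    exact fun _ => _root_.not_finite (ZMod 0)
  · simp only [Nat.succ_pos, iff_true]
    infer_instance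

theorem orbitOf_eq_of_mem (h : y ∈ orbitOf γ x) : orbitOf γ y = orbitOf γ x :=
  Set.ext fun _ => ⟨SameCycle.trans h, SameCycle.trans (SameCycle.symm h)⟩

theorem iterate_mem_orbitOf (γ : Perm ℕ) (x : ℕ) (n : ℕ) : (γ^[n]) x ∈ orbitOf γ x :=
  ⟨n, by simp [iterate_eq_pow]⟩

theorem apply_mem_orbitOf_iff : γ y ∈ orbitOf γ x ↔ y ∈ orbitOf γ x :=
  sameCycle_apply_right

theorem orbitOf_conj (σ γ : Perm ℕ) (x : ℕ) :
    orbitOf (σ * γ * σ⁻¹) (σ x) = σ '' orbitOf γ x := by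
  ext y
  rw [mem_orbitOf_iff, sameCycle_conj, ← mem_orbitOf_iff, Set.mem_image_equiv]
  simp only [Perm.inv_def, symm_apply_apply]

theorem disjoint_orbitOf_of_finite (hx : (orbitOf γ x).Finite) (hy : ¬(orbitOf γ y).Finite) :
    Disjoint (orbitOf γ x) (orbitOf γ y) :=
  Set.disjoint_left.2 fun _ hzx hzy =>
    hy (orbitOf_eq_of_mem hzy ▸ orbitOf_eq_of_mem hzx ▸ hx)

theorem exists_subset_image_iterate_of_subset_orbitOf {c : ℕ} {F : Set ℕ} (hF : F.Finite)
    (hFc : F ⊆ orbitOf γ c) :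
    ∃ c' ∈ orbitOf γ c, ∃ M, F ⊆ (γ^[·] c') '' Iio M := by
  have hFc' : ∀ y ∈ F, ∃ k : ℤ, (γ ^ k) c = y := hFc
  choose! k hk using hFc'
  obtain ⟨m, hm⟩ := (hF.image fun y => (k y).natAbs).bddAbove
  refine ⟨(γ ^ (-(m : ℤ))) c, ⟨_, rfl⟩, 2 * m + 1, fun y hy => ?_⟩
  have hky : (k y).natAbs ≤ m := hm (mem_image_of_mem _ hy)
  refine ⟨(k y + m).toNat, by simp only [mem_Iio]; omega, ?_⟩
  dsimp only
  rw [iterate_eq_pow, ← zpow_natCast, ← Perm.mul_apply, ← zpow_add]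
  convert hk y hy using 3
  omega

end Orbit

def HasUnboundedFiniteCycles (γ : Perm ℕ) : Prop :=
  ∀ n : ℕ, ∃ x : ℕ, (orbitOf γ x).Finite ∧ n < (orbitOf γ x).ncard

theorem HasUnboundedFiniteCycles.of_isConj {ρ γ : Perm ℕ} (hρ : HasUnboundedFiniteCycles ρ)
    (h : IsConj ρ γ) : HasUnboundedFiniteCycles γ := by
  obtain ⟨σ, rfl⟩ := isConj_iff.1 h
  intro n
  obtain ⟨x, hfin, hcard⟩ := hρ n
  refine ⟨σ x, ?_, ?_⟩ <;> rw [orbitOf_conj]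
  · exact hfin.image σ
  · rwa [ncard_image_of_injective _ σ.injective]

theorem HasUnboundedFiniteCycles.exists_lt_minimalPeriod_disjoint {γ : Perm ℕ}
    (hγ : HasUnboundedFiniteCycles γ) {G : Set ℕ} (hG : G.Finite) (m : ℕ) :
    ∃ x, m < minimalPeriod γ x ∧ Disjoint (orbitOf γ x) G := by
  set B := ⋃ y ∈ G ∩ {y | (orbitOf γ y).Finite}, orbitOf γ y
  have hB : B.Finite := (hG.inter_of_left _).biUnion fun y hy => hy.2
  obtain ⟨x, hxfin, hx⟩ := hγ (max m B.ncard)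
  refine ⟨x, ncard_orbitOf γ x ▸ (le_max_left _ _).trans_lt hx,
    disjoint_left.2 fun z hzx hzG => ?_⟩
  have hsub : orbitOf γ x ⊆ B := by
    rw [← orbitOf_eq_of_mem hzx]
    exact subset_biUnion_of_mem (u := fun y => orbitOf γ y)
      ⟨hzG, by rwa [mem_ofPred_eq, orbitOf_eq_of_mem hzx]⟩
  exact (ncard_le_ncard hsub hB).not_gt ((le_max_right _ _).trans_lt hx)

/- Conjugating by the involution that exchanges `γ^[i] c` with `γ^[i] x` for `i ≤ M` transplants
the segment `c, …, γ^[M] c` of the infinite orbit onto a stretch of the finite cycle of `x`. -/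
theorem exists_isConj_eqOn_of_notMem_periodicPts {γ : Perm ℕ} {c x M : ℕ}
    (hc : c ∉ periodicPts γ) (hx : M < minimalPeriod γ x) :
    ∃ π : Perm ℕ, IsConj γ π ∧
      EqOn π γ ((γ^[·] c) '' Iio M ∪ (orbitOf γ c ∪ orbitOf γ x)ᶜ) ∧
      ∀ i ≤ M, (orbitOf π (γ^[i] c)).Finite := by
  set s := swapsProd (γ^[·] c) (γ^[·] x) (M + 1)
  have hxfin : (orbitOf γ x).Finite :=
    orbitOf_finite_iff.2 (minimalPeriod_pos_iff_mem_periodicPts.1 (by omega))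
  have ha : InjOn (γ^[·] c) (Iio (M + 1)) :=
    (γ.injective.iterate_injective_of_notMem_periodicPts hc).injOn
  have hb : InjOn (γ^[·] x) (Iio (M + 1)) :=
    iterate_injOn_Iio_minimalPeriod.mono (Iio_subset_Iio hx)
  have hab : Disjoint ((γ^[·] c) '' Iio (M + 1)) ((γ^[·] x) '' Iio (M + 1)) :=
    (disjoint_orbitOf_of_finite hxfin (mt orbitOf_finite_iff.1 hc)).symm.mono
      ((image_subset_range _ _).trans (range_subset_iff.2 (iterate_mem_orbitOf γ c)))
      ((image_subset_range _ _).trans (range_subset_iff.2 (iterate_mem_orbitOf γ x)))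
  have hsx {i} (hi : i ≤ M) : s (γ^[i] x) = γ^[i] c :=
    swapsProd_apply_right ha hb hab (by omega)
  have hs {z} (hz : z ∉ orbitOf γ c ∪ orbitOf γ x) : s z = z :=
    swapsProd_apply_of_notMem (fun ⟨i, _, h⟩ => hz (.inl (h ▸ iterate_mem_orbitOf γ c i)))
      (fun ⟨i, _, h⟩ => hz (.inr (h ▸ iterate_mem_orbitOf γ x i)))
  refine ⟨s * γ * s⁻¹, isConj_iff.2 ⟨s, rfl⟩, ?_, fun i hi => ?_⟩
  · rintro y (⟨i, hi, rfl⟩ | hy)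
    · have hi : i < M := hi
      rw [Perm.mul_apply, Perm.mul_apply, Perm.inv_eq_iff_eq.2 (hsx hi.le).symm,
        ← iterate_succ_apply' γ i x, ← iterate_succ_apply' γ i c]
      exact hsx hi
    · have hγy : γ y ∉ orbitOf γ c ∪ orbitOf γ x := by
        simpa only [mem_compl_iff, mem_union, apply_mem_orbitOf_iff] using hy
      rw [Perm.mul_apply, Perm.mul_apply, Perm.inv_eq_iff_eq.2 (hs hy).symm, hs hγy]
  · rw [← hsx hi, orbitOf_conj, orbitOf_eq_of_mem (iterate_mem_orbitOf γ x i)]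
    exact hxfin.image s

theorem HasUnboundedFiniteCycles.exists_isConj_eqOn_orbitOf_finite {γ : Perm ℕ}
    (hγ : HasUnboundedFiniteCycles γ) (c : ℕ) {G : Set ℕ} (hG : G.Finite) :
    ∃ π : Perm ℕ, IsConj γ π ∧ EqOn π γ G ∧ (orbitOf π c).Finite := by
  by_cases hc : (orbitOf γ c).Finite
  · exact ⟨γ, .refl γ, eqOn_refl _ _, hc⟩
  obtain ⟨c', hc'c, M, hcover⟩ := exists_subset_image_iterate_of_subset_orbitOf
    ((hG.inter_of_left _).insert c) (insert_subset ⟨0, rfl⟩ inter_subset_right)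
  obtain ⟨x, hxM, hxG⟩ := hγ.exists_lt_minimalPeriod_disjoint hG M
  have horb : orbitOf γ c' = orbitOf γ c := orbitOf_eq_of_mem hc'c
  obtain ⟨π, hπ, hπγ, hπfin⟩ :=
    exists_isConj_eqOn_of_notMem_periodicPts (mt orbitOf_finite_iff.2 (horb ▸ hc)) hxM
  refine ⟨π, hπ, fun y hy => hπγ ?_, ?_⟩
  · by_cases hyc : y ∈ orbitOf γ c
    · exact .inl (hcover (mem_insert_of_mem _ ⟨hy, hyc⟩))
    · exact .inr fun h => h.elim (fun h => hyc (horb ▸ h)) (fun h => disjoint_left.1 hxG h hy)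
  · obtain ⟨i, hi, hci⟩ := hcover (mem_insert c _)
    exact hci ▸ hπfin i (le_of_lt hi)

theorem continuous_perm_apply (a : ℕ) : Continuous fun δ : Perm ℕ => δ a :=
  have : Continuous fun δ : Perm ℕ => (⇑δ, ⇑δ.symm) := continuous_induced_dom
  (continuous_apply a).comp (continuous_fst.comp this)

theorem continuous_iterate_perm_apply (n c : ℕ) : Continuous fun δ : Perm ℕ => δ^[n] c := by
  induction n with
  | zero => exact continuous_const
  | succ n ih =>
    simp only [iterate_succ_apply']
    exact ((continuous_prod_of_discrete_left (f := fun p : ℕ × Perm ℕ => p.2 p.1)).2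
      continuous_perm_apply).comp (ih.prodMk continuous_id)

theorem isOpen_setOf_orbitOf_finite (c : ℕ) : IsOpen {δ : Perm ℕ | (orbitOf δ c).Finite} := by
  have : {δ : Perm ℕ | (orbitOf δ c).Finite} = ⋃ n > 0, {δ : Perm ℕ | IsPeriodicPt δ n c} := by
    ext δ
    simp [orbitOf_finite_iff, mem_periodicPts]
  rw [this]
  exact isOpen_biUnion fun n _ =>
    (isOpen_discrete {c}).preimage (continuous_iterate_perm_apply n c)

theorem exists_finset_eqOn_subset_of_mem_nhds {ι β : Type*} [TopologicalSpace β]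
    [DiscreteTopology β] {f : ι → β} {t : Set (ι → β)} (ht : t ∈ 𝓝 f) :
    ∃ I : Finset ι, {g | EqOn g f I} ⊆ t := by
  rw [nhds_pi, Filter.mem_pi'] at ht
  obtain ⟨I, u, hu, hIu⟩ := ht
  exact ⟨I, fun g hg => hIu fun i hi => (hg hi).symm ▸ mem_of_mem_nhds (hu i)⟩

theorem exists_finite_eqOn_subset_of_mem_nhds {γ : Perm ℕ} {V : Set (Perm ℕ)} (hV : V ∈ 𝓝 γ) :
    ∃ G : Set ℕ, G.Finite ∧ {π : Perm ℕ | EqOn π γ G} ⊆ V := by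
  rw [nhds_induced, mem_comap] at hV
  obtain ⟨t, ht, htV⟩ := hV
  rw [nhds_prod_eq, mem_prod_iff] at ht
  obtain ⟨t₁, ht₁, t₂, ht₂, ht⟩ := ht
  obtain ⟨I, hI⟩ := exists_finset_eqOn_subset_of_mem_nhds ht₁
  obtain ⟨J, hJ⟩ := exists_finset_eqOn_subset_of_mem_nhds ht₂
  refine ⟨I ∪ γ.symm '' J, I.finite_toSet.union (J.finite_toSet.image _), fun π hπ => htV (ht
    ⟨hI (EqOn.mono subset_union_left hπ), hJ fun j hj => ?_⟩)⟩
  rw [symm_apply_eq, hπ (subset_union_right (mem_image_of_mem _ hj)), apply_symm_apply]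

theorem dense_setOf_orbitOf_finite {ρ : Perm ℕ} (hρ : HasUnboundedFiniteCycles ρ) (c : ℕ) :
    Dense {δ : Crho ρ | (orbitOf δ c).Finite} := by
  refine Subtype.dense_iff.2 (closure_minimal (fun γ hγ => ?_) isClosed_closure)
  rw [mem_closure_iff_nhds]
  intro V hV
  obtain ⟨G, hG, hGV⟩ := exists_finite_eqOn_subset_of_mem_nhds hV
  obtain ⟨π, hγπ, hπG, hπc⟩ := (hρ.of_isConj hγ).exists_isConj_eqOn_orbitOf_finite c hG
  exact ⟨π, hGV hπG, ⟨π, subset_closure (hγ.trans hγπ)⟩, hπc, rfl⟩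

/-- if `ρ` has finite cycles of unbounded length, then for each
`c ∈ ℕ` the set of `δ ∈ C_ρ` with `c` in a finite cycle of `δ` is dense open in
`C_ρ`, and the set of `δ ∈ C_ρ` with no infinite cycle is comeagre in `C_ρ`. -/
theorem stmt17 (ρ : Equiv.Perm ℕ)
    (hub : ∀ n : ℕ, ∃ x : ℕ, (orbitOf ρ x).Finite ∧ n < (orbitOf ρ x).ncard) :
    (∀ c : ℕ,
      IsOpen {δ : ↥(Crho ρ) | (orbitOf (δ : Equiv.Perm ℕ) c).Finite} ∧
      Dense {δ : ↥(Crho ρ) | (orbitOf (δ : Equiv.Perm ℕ) c).Finite}) ∧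
    {δ : ↥(Crho ρ) | ∀ x : ℕ, (orbitOf (δ : Equiv.Perm ℕ) x).Finite} ∈
      residual ↥(Crho ρ) := by
  have hopen (c : ℕ) : IsOpen {δ : Crho ρ | (orbitOf δ c).Finite} :=
    (isOpen_setOf_orbitOf_finite c).preimage continuous_subtype_val
  have hdense := dense_setOf_orbitOf_finite hub
  refine ⟨fun c => ⟨hopen c, hdense c⟩, ?_⟩
  rw [ofPred_forall]
  exact countable_iInter_mem.2 fun c => residual_of_dense_open (hopen c) (hdense c)
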